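/- arXiv:1811.08539 — 7 statements merged into one kernel-verified Lean document; each statement's English description precedes it below -/
import Mathlib

section
/- If S ⊆ [m] × 𝒞 is not a partial schedule, then y_S belongs to the scheduling ideal sched, i.e., y_S ≡ 0 (mod sched). -/
open MvPolynomial

noncomputable section

/-- The scheduling ideal: generated by `Σ_C y_{iC} − 1` (i ∈ [m]) and `y_{iC}² − y_{iC}`. -/
def schedIdeal (m : ℕ) (C : Type*) [Fintype C] : Ideal (MvPolynomial (Fin m × C) ℝ) :=
  Ideal.span
    ((Set.range fun i : Fin m => (∑ c : C, X (i, c)) - 1) ∪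
     (Set.range fun e : Fin m × C => (X e : MvPolynomial (Fin m × C) ℝ) ^ 2 - X e))

/-- `S` is a partial schedule: every machine occurs in at most one pair of `S`. -/
def IsPartialSchedule {m : ℕ} {C : Type*} (S : Finset (Fin m × C)) : Prop :=
  ∀ p ∈ S, ∀ q ∈ S, p.1 = q.1 → p = q

/-- The square-free monomial `y_S = ∏_{(i,C)∈S} y_{iC}`. -/
def ymon {m : ℕ} {C : Type*} (S : Finset (Fin m × C)) : MvPolynomial (Fin m × C) ℝ :=
  ∏ e ∈ S, X e

/-!
Modulo `sched`, the variables `y_{i,c}` of a fixed machine `i` are idempotents summing to `1`.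
In a ring without additive torsion such idempotents are automatically orthogonal, so
`y_{i,c} y_{i,d} ∈ sched` for `c ≠ d`, and this product divides `y_S` whenever `S` uses
machine `i` twice.
-/

section Idempotents

variable {R : Type*} [CommRing R] [IsAddTorsionFree R] {ι : Type*}

theorem eq_zero_of_mul_natCast_add_sum_idempotents_eq_zero {e : ι → R} (s : Finset ι)
    (he : ∀ j ∈ s, IsIdempotentElem (e j)) {f : R} {k : ℕ} (hk : k ≠ 0)
    (h : f * (k + ∑ j ∈ s, e j) = 0) : f = 0 := by
  classical
  induction s using Finset.induction generalizing f k with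
  | empty =>
    rw [Finset.sum_empty, add_zero, mul_comm, ← nsmul_eq_mul] at h
    exact nsmul_right_injective hk (h.trans (nsmul_zero k).symm)
  | insert a s ha ih =>
    have he' : ∀ j ∈ s, IsIdempotentElem (e j) := fun j hj => he j (Finset.mem_insert_of_mem hj)
    have hea : e a * e a = e a := he a (Finset.mem_insert_self a s)
    rw [Finset.sum_insert ha] at h
    -- multiplying by `e a` turns the summand `e a` into one more copy of `1`
    have hfa : f * e a = 0 := ih he' (Nat.succ_ne_zero k) <| by
      push_cast
      linear_combination e a * h - f * hea
    exact ih he' hk (by linear_combination h - hfa)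

theorem CompleteOrthogonalIdempotents.of_sum_eq_one [Fintype ι] {e : ι → R}
    (idem : ∀ i, IsIdempotentElem (e i)) (complete : ∑ i, e i = 1) :
    CompleteOrthogonalIdempotents e := by
  classical
  refine ⟨⟨idem, fun a b hab => ?_⟩, complete⟩
  set rest := (Finset.univ.erase a).erase b
  have hsplit : ∑ i, e i = e a + e b + ∑ i ∈ rest, e i := by
    rw [← Finset.add_sum_erase _ _ (Finset.mem_univ a),
      ← Finset.add_sum_erase _ _ (Finset.mem_erase.2 ⟨hab.symm, Finset.mem_univ b⟩), add_assoc]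
  refine eq_zero_of_mul_natCast_add_sum_idempotents_eq_zero rest (fun i _ => idem i)
    one_ne_zero ?_
  have ha : e a * e a = e a := idem a
  have hb : e b * e b = e b := idem b
  rw [complete] at hsplit
  push_cast
  linear_combination (e a * e b) * hsplit.symm - e b * ha - e a * hb

end Idempotents

section Sched

variable {m : ℕ} {C : Type*} [Fintype C]

theorem isIdempotentElem_mk_X (e : Fin m × C) :
    IsIdempotentElem (Ideal.Quotient.mk (schedIdeal m C) (X e)) := by
  rw [IsIdempotentElem, ← map_mul, Ideal.Quotient.eq, ← pow_two]
  exact Ideal.subset_span (Or.inr ⟨e, rfl⟩)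

theorem sum_mk_X_eq_one (i : Fin m) :
    ∑ c : C, Ideal.Quotient.mk (schedIdeal m C) (X (i, c)) = 1 := by
  rw [← map_sum, ← map_one (Ideal.Quotient.mk _), Ideal.Quotient.eq]
  exact Ideal.subset_span (Or.inl ⟨i, rfl⟩)

theorem completeOrthogonalIdempotents_mk_X (i : Fin m) :
    CompleteOrthogonalIdempotents fun c : C => Ideal.Quotient.mk (schedIdeal m C) (X (i, c)) :=
  have := IsAddTorsionFree.of_isTorsionFree ℝ (MvPolynomial (Fin m × C) ℝ ⧸ schedIdeal m C)
  .of_sum_eq_one (fun c => isIdempotentElem_mk_X (i, c)) (sum_mk_X_eq_one i)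

theorem X_mul_X_mem_schedIdeal {p q : Fin m × C} (h₁ : p.1 = q.1) (h₂ : p.2 ≠ q.2) :
    X p * X q ∈ schedIdeal m C := by
  rw [← Ideal.Quotient.eq_zero_iff_mem, map_mul]
  obtain ⟨i, c⟩ := p
  obtain ⟨i', d⟩ := q
  obtain rfl : i = i' := h₁
  exact (completeOrthogonalIdempotents_mk_X i).ortho h₂

end Sched

theorem ymon_mem_schedIdeal_of_not_partialSchedule_general
    {m : ℕ} {C : Type*} [Fintype C]
    (S : Finset (Fin m × C)) (hS : ¬ IsPartialSchedule S) :
    ymon S ∈ schedIdeal m C := by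
  classical
  simp only [IsPartialSchedule, not_forall] at hS
  obtain ⟨p, hp, q, hq, h₁, hpq⟩ := hS
  have h₂ : p.2 ≠ q.2 := fun h => hpq (Prod.ext h₁ h)
  have hdvd : X p * X q ∣ ymon S := by
    rw [← Finset.prod_pair hpq]
    exact Finset.prod_dvd_prod_of_subset _ _ _ (Finset.insert_subset hp (by simpa using hq))
  exact Ideal.mem_of_dvd _ hdvd (X_mul_X_mem_schedIdeal h₁ h₂)

/-- If `S` is not a partial schedule, then `y_S ≡ 0 (mod sched)`. -/
theorem ymon_mem_schedIdeal_of_not_partialSchedule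
    {m : ℕ} {C : Type*} [Fintype C] [Nonempty C]
    (S : Finset (Fin m × C)) (hS : ¬ IsPartialSchedule S) :
    ymon S ∈ schedIdeal m C :=
  ymon_mem_schedIdeal_of_not_partialSchedule_general S hS
end
end

section
/- Let ℓ ∈ ℕ with ℓ ≤ m, and let S ⊆ [m] × 𝒞 be a partial schedule with |S| ≤ ℓ. Then, in the quotient ring ℝ[y]/sched, the class of y_S lies in the linear span of the set {class of y_L : L ⊆ [m] × 𝒞 is a partial schedule with |L| = ℓ}. -/
/-
While `|S| < ℓ ≤ m` some machine `i` is idle in `S`. Since `Σ_C y_{iC} = 1` modulo `sched`,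
`y_S ≡ Σ_C y_{S ∪ {(i,C)}}`, and each `S ∪ {(i,C)}` is again a partial schedule, one pair larger.
Recursing on `ℓ − |S|` writes `y_S` as a sum of classes `y_L` with `|L| = ℓ`.
-/

open MvPolynomial

noncomputable section

section

variable {m : ℕ} {C : Type*}

theorem IsPartialSchedule.exists_idle_of_card_lt {S : Finset (Fin m × C)}
    (hS : IsPartialSchedule S) (hlt : S.card < m) : ∃ i : Fin m, ∀ c : C, (i, c) ∉ S := by
  classical
  have hcard : (S.image Prod.fst).card < (Finset.univ : Finset (Fin m)).card := by
    rwa [Finset.card_image_of_injOn fun p hp q hq => hS p hp q hq, Finset.card_univ,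
      Fintype.card_fin]
  obtain ⟨i, -, hi⟩ := Finset.exists_mem_notMem_of_card_lt_card hcard
  exact ⟨i, fun c hc => hi (Finset.mem_image_of_mem Prod.fst hc)⟩

theorem IsPartialSchedule.insert [DecidableEq C] {S : Finset (Fin m × C)}
    (hS : IsPartialSchedule S) {i : Fin m} (hi : ∀ c : C, (i, c) ∉ S) (c : C) :
    IsPartialSchedule (insert (i, c) S) := by
  rintro ⟨j, d⟩ hp ⟨j', d'⟩ hq (rfl : j = j')
  rw [Finset.mem_insert, Prod.mk.injEq] at hp hq
  rcases hp with ⟨rfl, rfl⟩ | hp <;> rcases hq with ⟨hj, rfl⟩ | hq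
  · rfl
  · exact absurd hq (hi d')
  · exact absurd hp (hj ▸ hi d)
  · exact hS _ hp _ hq rfl

variable [Fintype C]

theorem mk_sum_X_eq_one (i : Fin m) :
    Ideal.Quotient.mk (schedIdeal m C) (∑ c : C, X (i, c)) = 1 :=
  Ideal.Quotient.eq.2 (Ideal.subset_span (Or.inl ⟨i, rfl⟩))

theorem mk_ymon_eq_sum_mk_ymon_insert [DecidableEq C] {S : Finset (Fin m × C)} {i : Fin m}
    (hi : ∀ c : C, (i, c) ∉ S) :
    Ideal.Quotient.mk (schedIdeal m C) (ymon S) =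
      ∑ c : C, Ideal.Quotient.mk (schedIdeal m C) (ymon (insert (i, c) S)) := by
  simp only [ymon, Finset.prod_insert (hi _), map_mul, ← Finset.sum_mul, ← map_sum,
    mk_sum_X_eq_one, one_mul]

end

/-- In `ℝ[y]/sched`, the class of `y_S` (for a partial schedule `S` with `|S| ≤ ℓ ≤ m`) lies
in the span of the classes of `y_L` over partial schedules `L` with `|L| = ℓ`. -/
theorem ymon_mem_span_of_partialSchedule
    {m : ℕ} {C : Type*} [Fintype C] (ℓ : ℕ) (hℓ : ℓ ≤ m)
    (S : Finset (Fin m × C)) (hS : IsPartialSchedule S) (hcard : S.card ≤ ℓ) :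
    Ideal.Quotient.mk (schedIdeal m C) (ymon S) ∈
      Submodule.span ℝ
        {a : MvPolynomial (Fin m × C) ℝ ⧸ schedIdeal m C |
          ∃ L : Finset (Fin m × C), IsPartialSchedule L ∧ L.card = ℓ ∧
            a = Ideal.Quotient.mk (schedIdeal m C) (ymon L)} := by
  classical
  rcases hcard.eq_or_lt with hcard | hcard
  · exact Submodule.subset_span ⟨S, hS, hcard, rfl⟩
  obtain ⟨i, hi⟩ := hS.exists_idle_of_card_lt (hcard.trans_le hℓ)
  rw [mk_ymon_eq_sum_mk_ymon_insert hi]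
  refine Submodule.sum_mem _ fun c _ =>
    ymon_mem_span_of_partialSchedule ℓ hℓ _ (hS.insert hi c) ?_
  rwa [Finset.card_insert_of_notMem (hi c)]
termination_by ℓ - S.card
decreasing_by classical rw [Finset.card_insert_of_notMem (hi c)]; omega
end
end

section
/- Let E = [3k] × 𝒞 and let Ẽ be the linear functional on ℝ[y]/I_E (I_E the ideal generated by the polynomials y_{iC}² − y_{iC}) defined on square-free monomials by Ẽ(y_S) = (1/(3k)_{|S|}) · ∏_{j=1}^{6} (k/2)_{δ_S(C_j)} if S is a partial schedule with |S| ≤ ⌊k/2⌋, and Ẽ(y_S) = 0 otherwise. Then Ẽ is S_{3k}-symmetric: for every f ∈ ℝ[y]/I_E, Ẽ(f) = Ẽ((1/(3k)!) Σ_{σ∈S_{3k}} σ·f), where σ acts by y_{iC} ↦ y_{σ(i)C}. -/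
/-!
Modulo `y² - y` every monomial is a multiple of the square-free monomial on its support, so a
functional on `ℝ[y]/I_E` is determined by its values on the `y_S`. A machine permutation `σ`
sends `y_S` to `y_{σS}`, and `σS` is a partial schedule exactly when `S` is, with the same size
and the same counts `δ(C_j)`. Hence `Ẽ ∘ σ` agrees with `Ẽ` on every `y_S`, so everywhere, and
averaging over `S_{3k}` changes nothing.
-/

open MvPolynomial

set_option synthInstance.maxHeartbeats 400000
noncomputable section
open scoped Classical

/-- The ideal `I_E` generated by `y_e^2 - y_e` for `e ∈ E`. -/
def cubeIdeal (E : Type*) : Ideal (MvPolynomial E ℝ) :=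
  Ideal.span (Set.range fun e : E => (X e : MvPolynomial E ℝ) ^ 2 - X e)

/-- The quotient ring `ℝ[y]/I_E`. -/
abbrev CubeQuot (E : Type*) := MvPolynomial E ℝ ⧸ cubeIdeal E

def mkC {E : Type*} : MvPolynomial E ℝ →+* CubeQuot E :=
  Ideal.Quotient.mk (cubeIdeal E)

/-- `δ_S(c)`: the number of machines that `S` connects to configuration `c`. -/
def deltaS {m : ℕ} {C : Type*} [DecidableEq C] (S : Finset (Fin m × C)) (c : C) : ℕ :=
  (S.filter fun e => e.2 = c).card

/-- Falling factorial `(x)_b = x(x−1)⋯(x−b+1)`, with `(x)_0 = 1`. -/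
def ffall : ℝ → ℕ → ℝ
  | _, 0 => 1
  | x, n + 1 => x * ffall (x - 1) n

/-- The action of a machine permutation `σ ∈ S_m` on `ℝ[y]`, `σ · y_{iC} = y_{σ(i)C}`. -/
def permAct {m : ℕ} {C : Type*} (σ : Equiv.Perm (Fin m))
    (f : MvPolynomial (Fin m × C) ℝ) : MvPolynomial (Fin m × C) ℝ :=
  MvPolynomial.rename (fun e => (σ e.1, e.2)) f

/-- Symmetrization: `sym(f) = (1/m!) Σ_{σ∈S_m} σ·f`. -/
def symPoly {m : ℕ} {C : Type*} (f : MvPolynomial (Fin m × C) ℝ) :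
    MvPolynomial (Fin m × C) ℝ :=
  (m.factorial : ℝ)⁻¹ • ∑ σ : Equiv.Perm (Fin m), permAct σ f

section CubeQuot

variable {E F : Type*}

theorem mkC_smul (c : ℝ) (p : MvPolynomial E ℝ) : mkC (c • p) = c • mkC p :=
  map_smul (Ideal.Quotient.mkₐ ℝ (cubeIdeal E)) c p

theorem mkC_X_pow (e : E) {n : ℕ} (hn : n ≠ 0) :
    mkC ((X e : MvPolynomial E ℝ) ^ n) = mkC (X e) := by
  induction n, Nat.one_le_iff_ne_zero.2 hn using Nat.le_induction with
  | base => rw [pow_one]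
  | succ n _ ih =>
    have hidem : mkC ((X e : MvPolynomial E ℝ) ^ 2) = mkC (X e) := by
      rw [← sub_eq_zero, ← map_sub]
      exact Ideal.Quotient.eq_zero_iff_mem.2 (Ideal.subset_span ⟨e, rfl⟩)
    rw [pow_succ, map_mul, ih (by omega), ← map_mul, ← sq, hidem]

theorem mkC_monomial (d : E →₀ ℕ) (c : ℝ) :
    mkC (monomial d c) = c • mkC (∏ e ∈ d.support, X e) := by
  rw [← mkC_smul, smul_eq_C_mul, monomial_eq, map_mul, map_mul, Finsupp.prod, map_prod,
    map_prod]
  congr 1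
  exact Finset.prod_congr rfl fun e he => mkC_X_pow e (Finsupp.mem_support_iff.1 he)

theorem map_mkC_rename_eq_of_forall_finset {L : CubeQuot E →ₗ[ℝ] ℝ}
    {L' : CubeQuot F →ₗ[ℝ] ℝ} {ρ : E ↪ F}
    (h : ∀ S : Finset E, L' (mkC (∏ e ∈ S.map ρ, X e)) = L (mkC (∏ e ∈ S, X e)))
    (f : MvPolynomial E ℝ) : L' (mkC (rename ρ f)) = L (mkC f) := by
  induction f using MvPolynomial.induction_on' with
  | monomial d c =>
    have hsupport : (d.mapDomain ρ).support = d.support.map ρ := by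
      rw [← Finsupp.embDomain_eq_mapDomain, Finsupp.support_embDomain]
    rw [rename_monomial, mkC_monomial, mkC_monomial, map_smul, map_smul, hsupport, h]
  | add p q hp hq => rw [map_add, map_add, map_add, map_add, map_add, hp, hq]

end CubeQuot

section MachinePermutation

variable {m : ℕ} {C : Type*} (σ : Equiv.Perm (Fin m))

theorem isPartialSchedule_map_prodCongr_iff (S : Finset (Fin m × C)) :
    IsPartialSchedule (S.map (σ.prodCongr (Equiv.refl C)).toEmbedding) ↔
      IsPartialSchedule S := by
  have hfst (e : Fin m × C) : (σ.prodCongr (Equiv.refl C) e).1 = σ e.1 := rfl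
  simp only [IsPartialSchedule, Finset.forall_mem_map, Equiv.coe_toEmbedding, hfst,
    EmbeddingLike.apply_eq_iff_eq]

theorem deltaS_map_prodCongr [DecidableEq C] (S : Finset (Fin m × C)) (c : C) :
    deltaS (S.map (σ.prodCongr (Equiv.refl C)).toEmbedding) c = deltaS S c := by
  rw [deltaS, Finset.filter_map, Finset.card_map]
  rfl

theorem permAct_eq_rename_prodCongr (f : MvPolynomial (Fin m × C) ℝ) :
    permAct σ f = rename (σ.prodCongr (Equiv.refl C)).toEmbedding f :=
  rfl

end MachinePermutation

theorem pseudoexpectation_symmetric_general (k : ℕ)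
    (PE : CubeQuot (Fin (3 * k) × Fin 6) →ₗ[ℝ] ℝ)
    (hPE : ∀ S : Finset (Fin (3 * k) × Fin 6),
      PE (mkC (ymon S)) =
        if IsPartialSchedule S ∧ S.card ≤ k / 2 then
          (ffall (3 * k : ℝ) S.card)⁻¹ * ∏ j : Fin 6, ffall ((k : ℝ) / 2) (deltaS S j)
        else 0) :
    ∀ f : MvPolynomial (Fin (3 * k) × Fin 6) ℝ, PE (mkC f) = PE (mkC (symPoly f)) := by
  have hinvariant (σ : Equiv.Perm (Fin (3 * k))) (f : MvPolynomial (Fin (3 * k) × Fin 6) ℝ) :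
      PE (mkC (permAct σ f)) = PE (mkC f) := by
    rw [permAct_eq_rename_prodCongr]
    refine map_mkC_rename_eq_of_forall_finset (fun S => ?_) f
    show PE (mkC (ymon _)) = PE (mkC (ymon S))
    simp only [hPE, Finset.card_map, isPartialSchedule_map_prodCongr_iff, deltaS_map_prodCongr]
  intro f
  have hfactorial : ((3 * k).factorial : ℝ) ≠ 0 := mod_cast (Nat.factorial_pos _).ne'
  rw [symPoly, mkC_smul, map_smul, map_sum, map_sum,
    Finset.sum_congr rfl fun σ _ => hinvariant σ f, Finset.sum_const, Finset.card_univ,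
    Fintype.card_perm, Fintype.card_fin, nsmul_eq_mul, smul_eq_mul, inv_mul_cancel_left₀ hfactorial]

/-- The linear functional on `ℝ[y]/I_E` (`E = [3k] × {C₁,…,C₆}`) defined on square-free
monomials by `Ẽ(y_S) = (1/(3k)_{|S|}) ∏_j (k/2)_{δ_S(C_j)}` for partial schedules `S` with
`|S| ≤ ⌊k/2⌋` and `0` otherwise, is `S_{3k}`-symmetric. -/
theorem pseudoexpectation_symmetric (k : ℕ) (hk : Odd k) (hkpos : 0 < k)
    (PE : CubeQuot (Fin (3 * k) × Fin 6) →ₗ[ℝ] ℝ)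
    (hPE : ∀ S : Finset (Fin (3 * k) × Fin 6),
      PE (mkC (ymon S)) =
        if IsPartialSchedule S ∧ S.card ≤ k / 2 then
          (ffall (3 * k : ℝ) S.card)⁻¹ * ∏ j : Fin 6, ffall ((k : ℝ) / 2) (deltaS S j)
        else 0) :
    ∀ f : MvPolynomial (Fin (3 * k) × Fin 6) ℝ, PE (mkC f) = PE (mkC (symPoly f)) :=
  pseudoexpectation_symmetric_general k PE hPE
end
end

section
/- Let T, R, S ⊆ [3k] × 𝒞 be partial schedules whose machine sets ℳ(T), ℳ(R), ℳ(S) are pairwise disjoint. Then Ẽ_T(R ∪ S) = Ẽ_T(R) · Ẽ_{T∪R}(S). In particular, taking T = ∅: for machine-disjoint partial schedules T' and S', Ẽ(T' ∪ S') = Ẽ_{T'}(S') · Ẽ(T'). -/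
noncomputable section
open scoped Classical

/-- The machine set `ℳ(S)` of `S`. -/
def machSet {m : ℕ} {C : Type*} (S : Finset (Fin m × C)) : Finset (Fin m) :=
  S.image Prod.fst

/-- The conditional pseudoexpectation value
`Ẽ_T(S) = (1/(3k − |T|)_{|S|}) · ∏_{j=1}^{6} (k/2 − δ_T(C_j))_{δ_S(C_j)}`
if `S` is a partial schedule, and `0` otherwise. -/
def pexp (k : ℕ) (T S : Finset (Fin (3 * k) × Fin 6)) : ℝ :=
  if IsPartialSchedule S then
    (ffall ((3 * k : ℝ) - T.card) S.card)⁻¹ *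
      ∏ j : Fin 6, ffall ((k : ℝ) / 2 - deltaS T j) (deltaS S j)
  else 0

/-- A profile `γ : 𝒞 → ℕ` has norm `‖γ‖ = Σ_C γ(C)`. -/
def pnorm (γ : Fin 6 → ℕ) : ℕ := ∑ c : Fin 6, γ c

/-- `ℱ(T,γ)`: partial schedules `A` with `ℳ(A) ⊆ [m] ∖ ℳ(T)` in `γ`-profile. -/
def extFam (k : ℕ) (T : Finset (Fin (3 * k) × Fin 6)) (γ : Fin 6 → ℕ) :
    Finset (Finset (Fin (3 * k) × Fin 6)) :=
  Finset.univ.filter fun A =>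
    IsPartialSchedule A ∧ Disjoint (machSet A) (machSet T) ∧ ∀ c, deltaS A c = γ c

/-!
Every factor of `Ẽ` is a falling factorial, and `(x)_(a+b) = (x)_a · (x - a)_b`. Machine-disjointness
makes `|T ∪ R| = |T| + |R|` and `δ_{T ∪ R} = δ_T + δ_R`, so each falling factorial of `Ẽ_T(R ∪ S)`
splits into the matching ones of `Ẽ_T(R)` and `Ẽ_{T ∪ R}(S)`.
-/

open Polynomial in
lemma ffall_eq_eval_descPochhammer (x : ℝ) (n : ℕ) : ffall x n = (descPochhammer ℝ n).eval x := by
  induction n generalizing x with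
  | zero => simp [ffall]
  | succ n ih => simp [ffall, descPochhammer_succ_left, ih]

open Polynomial in
lemma ffall_add (x : ℝ) (a b : ℕ) : ffall x (a + b) = ffall x a * ffall (x - a) b := by
  simp only [ffall_eq_eval_descPochhammer, ← descPochhammer_mul, eval_mul, eval_comp, eval_sub,
    eval_X, eval_natCast]

section Schedules

variable {m : ℕ} {C : Type*} {R S : Finset (Fin m × C)}

lemma deltaS_union_of_disjoint [DecidableEq C] (h : Disjoint R S) (c : C) :
    deltaS (R ∪ S) c = deltaS R c + deltaS S c := by
  rw [deltaS, Finset.filter_union, Finset.card_union_of_disjoint (Finset.disjoint_filter_filter h)]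
  rfl

lemma IsPartialSchedule.union [DecidableEq C] (hR : IsPartialSchedule R) (hS : IsPartialSchedule S)
    (h : Disjoint (machSet R) (machSet S)) : IsPartialSchedule (R ∪ S) := by
  have cross : ∀ p ∈ R, ∀ q ∈ S, p.1 ≠ q.1 := fun p hp q hq hpq =>
    Finset.disjoint_left.mp h (Finset.mem_image_of_mem _ hp) (hpq ▸ Finset.mem_image_of_mem _ hq)
  intro p hp q hq hpq
  rcases Finset.mem_union.mp hp with hp | hp <;> rcases Finset.mem_union.mp hq with hq | hq
  · exact hR p hp q hq hpq
  · exact absurd hpq (cross p hp q hq)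
  · exact absurd hpq.symm (cross q hq p hp)
  · exact hS p hp q hq hpq

end Schedules

lemma pexp_union_eq_mul (k : ℕ) (T R S : Finset (Fin (3 * k) × Fin 6))
    (hR : IsPartialSchedule R) (hS : IsPartialSchedule S)
    (hTR : Disjoint (machSet T) (machSet R)) (hRS : Disjoint (machSet R) (machSet S)) :
    pexp k T (R ∪ S) = pexp k T R * pexp k (T ∪ R) S := by
  have hdTR := Disjoint.of_image_finset hTR
  have hdRS := Disjoint.of_image_finset hRS
  have hprod : ∏ j : Fin 6, ffall ((k : ℝ) / 2 - deltaS T j) (deltaS (R ∪ S) j)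
      = (∏ j : Fin 6, ffall ((k : ℝ) / 2 - deltaS T j) (deltaS R j)) *
        ∏ j : Fin 6, ffall ((k : ℝ) / 2 - deltaS (T ∪ R) j) (deltaS S j) := by
    rw [← Finset.prod_mul_distrib]
    refine Finset.prod_congr rfl fun j _ => ?_
    rw [deltaS_union_of_disjoint hdRS, deltaS_union_of_disjoint hdTR, ffall_add, Nat.cast_add,
      sub_add_eq_sub_sub]
  rw [pexp, pexp, pexp, if_pos (hR.union hS hRS), if_pos hR, if_pos hS, hprod,
    Finset.card_union_of_disjoint hdRS, Finset.card_union_of_disjoint hdTR, ffall_add, Nat.cast_add,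
    sub_add_eq_sub_sub, mul_inv]
  ring

theorem pexp_union_general (k : ℕ)
    (T R S : Finset (Fin (3 * k) × Fin 6))
    (hR : IsPartialSchedule R) (hS : IsPartialSchedule S)
    (hTR : Disjoint (machSet T) (machSet R))
    (hRS : Disjoint (machSet R) (machSet S)) :
    pexp k T (R ∪ S) = pexp k T R * pexp k (T ∪ R) S ∧
    ∀ T' S' : Finset (Fin (3 * k) × Fin 6),
      IsPartialSchedule T' → IsPartialSchedule S' →
      Disjoint (machSet T') (machSet S') →
      pexp k ∅ (T' ∪ S') = pexp k T' S' * pexp k ∅ T' := by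
  refine ⟨pexp_union_eq_mul k T R S hR hS hTR hRS, fun T' S' hT' hS' hd => ?_⟩
  have h := pexp_union_eq_mul k ∅ T' S' hT' hS' (by simp [machSet]) hd
  rw [Finset.empty_union] at h
  exact h.trans (mul_comm _ _)

/-- For partial schedules `T, R, S` with pairwise disjoint machine sets:
`Ẽ_T(R ∪ S) = Ẽ_T(R) · Ẽ_{T∪R}(S)`; in particular, taking `T = ∅`, for machine-disjoint
partial schedules `T'` and `S'`, `Ẽ(T' ∪ S') = Ẽ_{T'}(S') · Ẽ(T')`. -/
theorem pexp_union (k : ℕ) (hk : Odd k) (hkpos : 0 < k)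
    (T R S : Finset (Fin (3 * k) × Fin 6))
    (hT : IsPartialSchedule T) (hR : IsPartialSchedule R) (hS : IsPartialSchedule S)
    (hTR : Disjoint (machSet T) (machSet R))
    (hTS : Disjoint (machSet T) (machSet S))
    (hRS : Disjoint (machSet R) (machSet S)) :
    pexp k T (R ∪ S) = pexp k T R * pexp k (T ∪ R) S ∧
    ∀ T' S' : Finset (Fin (3 * k) × Fin 6),
      IsPartialSchedule T' → IsPartialSchedule S' →
      Disjoint (machSet T') (machSet S') →
      pexp k ∅ (T' ∪ S') = pexp k T' S' * pexp k ∅ T' :=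
  pexp_union_general k T R S hR hS hTR hRS
end
end

section
/- In every integral solution x of assign(B,T), for every machine i ∈ {1,…,m−1} we have conf_i(x) ≥_lex conf_{i+1}(x), i.e., either conf_i(x) = conf_{i+1}(x) or conf_{i+1}(x) <_lex conf_i(x). -/
/-!
The symmetry-breaking constraint for machines `i` and `i + 1` says that the integer with base-`B`
digits `conf_i(x)(1), …, conf_i(x)(s)` (most significant first) is at least the one with digits
`conf_{i+1}(x)(1), …, conf_{i+1}(x)(s)`. A machine holds at most `|J_q|` jobs of class `q`, and
`B > s · max_q |J_q|`, so these really are base-`B` digits, and for base-`B` numerals the numeric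
order is the lexicographic order of the digit strings.
-/

noncomputable section
open scoped Classical
open Finset

/-- The class `J_q` of long jobs whose processing time lies in
`[(1/ε + q − 1)·ε²T, (1/ε + q)·ε²T)`. -/
def Jq {ι : Type*} [Fintype ι] (p : ι → ℝ) (ε T : ℝ) (q : ℕ) : Finset ι :=
  Finset.univ.filter fun j =>
    (1 / ε + (q : ℝ) - 1) * ε ^ 2 * T ≤ p j ∧ p j < (1 / ε + (q : ℝ)) * ε ^ 2 * T

/-- `conf_i(x)(q) = Σ_{j ∈ J_q} x_{ij}`, the number of jobs of class `q` on machine `i`. -/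
def conf {ι : Type*} [Fintype ι] (p : ι → ℝ) (ε T : ℝ) (x : ℕ → ι → ℕ) (i q : ℕ) : ℕ :=
  ∑ j ∈ Jq p ε T q, x i j

/-- `C <_lex C'` on the index range `{1,…,s}`. -/
def LexLt (s : ℕ) (C C' : ℕ → ℕ) : Prop :=
  ∃ q ∈ Finset.Icc 1 s, (∀ ℓ ∈ Finset.Icc 1 s, ℓ < q → C ℓ = C' ℓ) ∧ C q < C' q

theorem sum_Icc_pow_sub_mul_succ {R : Type*} [CommSemiring R] (B : R) (C : ℕ → R) (s : ℕ) :
    ∑ q ∈ Icc 1 (s + 1), B ^ (s + 1 - q) * C q =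
      B * ∑ q ∈ Icc 1 s, B ^ (s - q) * C q + C (s + 1) := by
  rw [sum_Icc_succ_top (by omega), Nat.sub_self, pow_zero, one_mul, mul_sum]
  congr 1
  refine sum_congr rfl fun q hq => ?_
  rw [Nat.sub_add_comm (mem_Icc.mp hq).2, pow_succ']
  ring

theorem LexLt.mono_succ {s : ℕ} {C C' : ℕ → ℕ} (h : LexLt s C C') : LexLt (s + 1) C C' := by
  obtain ⟨q, hq, hlt, hq_lt⟩ := h
  have hqs := (mem_Icc.mp hq).2
  refine ⟨q, Icc_subset_Icc_right (by omega) hq, fun ℓ hℓ hℓq => ?_, hq_lt⟩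
  exact hlt ℓ (mem_Icc.mpr ⟨(mem_Icc.mp hℓ).1, by omega⟩) hℓq

theorem eq_or_lexLt_of_sum_pow_mul_le {B : ℕ} :
    ∀ {s : ℕ} {C C' : ℕ → ℕ}, (∀ q ∈ Icc 1 s, C q < B) →
      ∑ q ∈ Icc 1 s, B ^ (s - q) * C' q ≤ ∑ q ∈ Icc 1 s, B ^ (s - q) * C q →
      (∀ q ∈ Icc 1 s, C q = C' q) ∨ LexLt s C' C
  | 0, _, _, _, _ => Or.inl fun q hq => by simp at hq
  | s + 1, C, C', hC, hle => by
    rw [sum_Icc_pow_sub_mul_succ, sum_Icc_pow_sub_mul_succ] at hle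
    have hC_top : C (s + 1) < B := hC (s + 1) (by simp)
    -- the last digit is below `B`, so it cannot compensate a deficit in the leading digits
    have hle_s : ∑ q ∈ Icc 1 s, B ^ (s - q) * C' q ≤ ∑ q ∈ Icc 1 s, B ^ (s - q) * C q := by
      by_contra! hgt
      nlinarith
    rcases eq_or_lexLt_of_sum_pow_mul_le
        (fun q hq => hC q (Icc_subset_Icc_right (by omega) hq)) hle_s with heq | hlex
    · have hsum : ∑ q ∈ Icc 1 s, B ^ (s - q) * C' q = ∑ q ∈ Icc 1 s, B ^ (s - q) * C q :=
        sum_congr rfl fun q hq => by rw [heq q hq]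
      have hle_top : C' (s + 1) ≤ C (s + 1) := by rw [hsum] at hle; omega
      rcases hle_top.eq_or_lt with htop | htop
      · left
        intro q hq
        rcases (mem_Icc.mp hq).2.eq_or_lt with rfl | hq_lt
        · exact htop.symm
        · exact heq q (mem_Icc.mpr ⟨(mem_Icc.mp hq).1, by omega⟩)
      · right
        refine ⟨s + 1, by simp, fun ℓ hℓ hℓs => ?_, htop⟩
        exact (heq ℓ (mem_Icc.mpr ⟨(mem_Icc.mp hℓ).1, by omega⟩)).symm
    · exact Or.inr hlex.mono_succ

theorem conf_le_card {ι : Type*} [Fintype ι] (p : ι → ℝ) (ε T : ℝ) {x : ℕ → ι → ℕ}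
    (hx01 : ∀ i j, x i j ≤ 1) (i q : ℕ) : conf p ε T x i q ≤ (Jq p ε T q).card := by
  simpa [conf] using sum_le_sum fun j (_ : j ∈ Jq p ε T q) => hx01 i j

theorem integral_solution_lex_sorted_general {ι : Type*} [Fintype ι]
    (m s : ℕ) (ε T : ℝ) (p : ι → ℝ)
    (B : ℕ) (hB : B = 1 + 2 * s * ((Finset.Icc 1 s).sup fun q => (Jq p ε T q).card))
    (x : ℕ → ι → ℕ) (hx01 : ∀ i j, x i j ≤ 1)
    (hsym : ∀ i ∈ Finset.Icc 1 (m - 1),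
      0 ≤ ∑ q ∈ Finset.Icc 1 s,
            (B : ℤ) ^ (s - q) * ∑ j ∈ Jq p ε T q, ((x i j : ℤ) - (x (i + 1) j : ℤ))) :
    ∀ i ∈ Finset.Icc 1 (m - 1),
      (∀ q ∈ Finset.Icc 1 s, conf p ε T x i q = conf p ε T x (i + 1) q) ∨
        LexLt s (conf p ε T x (i + 1)) (conf p ε T x i) := by
  intro i hi
  have hdigit : ∀ q ∈ Icc 1 s, conf p ε T x i q < B := by
    intro q hq
    have hcard := le_sup (f := fun q => (Jq p ε T q).card) hq
    have hs : 1 ≤ s := (mem_Icc.mp hq).1.trans (mem_Icc.mp hq).2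
    have hconf := conf_le_card p ε T hx01 i q
    nlinarith
  refine eq_or_lexLt_of_sum_pow_mul_le hdigit ?_
  have h := hsym i hi
  simp only [sum_sub_distrib, mul_sub] at h
  exact_mod_cast sub_nonneg.mp h

/-- In every integral solution of `assign(B,T)`, the machine configurations are
lexicographically non-increasing: `conf_i(x) ≥_lex conf_{i+1}(x)` for `i ∈ {1,…,m−1}`. -/
theorem integral_solution_lex_sorted {ι : Type*} [Fintype ι]
    (m s : ℕ) (ε T : ℝ) (p : ι → ℝ)
    (hp : ∀ j, 0 < p j) (hT : 0 < T)
    (hε0 : 0 < ε) (hε1 : ε < 1) (hεint : ∃ t : ℤ, ε * (t : ℝ) = 1)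
    (hs : (s : ℝ) = (1 - ε) / ε ^ 2)
    (B : ℕ) (hB : B = 1 + 2 * s * ((Finset.Icc 1 s).sup fun q => (Jq p ε T q).card))
    (x : ℕ → ι → ℕ) (hx01 : ∀ i j, x i j ≤ 1)
    (hassign : ∀ j : ι, ∑ i ∈ Finset.Icc 1 m, x i j = 1)
    (hload : ∀ i ∈ Finset.Icc 1 m, ∑ j : ι, (x i j : ℝ) * p j ≤ T)
    (hsym : ∀ i ∈ Finset.Icc 1 (m - 1),
      0 ≤ ∑ q ∈ Finset.Icc 1 s,
            (B : ℤ) ^ (s - q) * ∑ j ∈ Jq p ε T q, ((x i j : ℤ) - (x (i + 1) j : ℤ))) :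
    ∀ i ∈ Finset.Icc 1 (m - 1),
      (∀ q ∈ Finset.Icc 1 s, conf p ε T x i q = conf p ε T x (i + 1) q) ∨
        LexLt s (conf p ε T x (i + 1)) (conf p ε T x i) :=
  integral_solution_lex_sorted_general m s ε T p B hB x hx01 hsym
end
end

section
/- If there exists an integral solution of assign(T), i.e., a map x : [m]×J → {0,1} with Σ_{i∈[m]} x_{ij} = 1 for all j ∈ J and Σ_{j∈J} x_{ij}·p_j ≤ T for all i ∈ [m], then there exists an integral solution of assign(B,T) (i.e., one additionally satisfying the symmetry-breaking constraints). -/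
noncomputable section
open scoped Classical
open Finset

/-!
The symmetry-breaking constraint for machine `i` says exactly that the weight
`Σ_q B^(s-q) · conf_i(q)` of machine `i` is at least that of machine `i + 1`. Relabelling the
machines by a permutation of `{1, …, m}` preserves the assignment and load constraints, so
sorting the machines of any solution of `assign(T)` by nonincreasing weight yields a solution
of `assign(B,T)`.
-/

theorem Finset.exists_perm_antitoneOn_comp {β α : Type*} [LinearOrder β] [LinearOrder α]
    (s : Finset β) (f : β → α) :
    ∃ π : Equiv.Perm β, (∀ b, π b ∈ s ↔ b ∈ s) ∧ {b | π b ≠ b} ⊆ s ∧ AntitoneOn (f ∘ π) s := by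
  let e := s.orderIsoOfFin rfl
  let σ := Tuple.sort fun k => OrderDual.toDual (f (e k))
  let τ : Equiv.Perm s := e.symm.toEquiv.trans (σ.trans e.toEquiv)
  refine ⟨Equiv.Perm.ofSubtype τ, Equiv.Perm.ofSubtype_apply_mem_iff_mem τ, ?_, ?_⟩
  · intro b hb
    by_contra hbs
    exact hb (Equiv.Perm.ofSubtype_apply_of_not_mem τ hbs)
  · intro a ha b hb hab
    simp only [Function.comp_apply, Equiv.Perm.ofSubtype_apply_of_mem τ ha,
      Equiv.Perm.ofSubtype_apply_of_mem τ hb]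
    exact Tuple.monotone_sort (fun k => OrderDual.toDual (f (e k)))
      (e.symm.monotone (Subtype.mk_le_mk.mpr hab))

def classWeight {ι : Type*} [Fintype ι] (p : ι → ℝ) (ε T : ℝ) (s B : ℕ) (x : ℕ → ι → ℕ)
    (i : ℕ) : ℤ :=
  ∑ q ∈ Icc 1 s, (B : ℤ) ^ (s - q) * conf p ε T x i q

theorem classWeight_sub_classWeight {ι : Type*} [Fintype ι] (p : ι → ℝ) (ε T : ℝ) (s B : ℕ)
    (x : ℕ → ι → ℕ) (i i' : ℕ) :
    classWeight p ε T s B x i - classWeight p ε T s B x i' =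
      ∑ q ∈ Icc 1 s, (B : ℤ) ^ (s - q) * ∑ j ∈ Jq p ε T q, ((x i j : ℤ) - (x i' j : ℤ)) := by
  simp only [classWeight, conf, Nat.cast_sum, sum_sub_distrib, mul_sub]

theorem exists_integral_solution_with_symmetry_breaking_general {ι : Type*} [Fintype ι]
    (m s : ℕ) (ε T : ℝ) (p : ι → ℝ)
    (B : ℕ)
    (hfeas : ∃ x : ℕ → ι → ℕ, (∀ i j, x i j ≤ 1) ∧
      (∀ j : ι, ∑ i ∈ Finset.Icc 1 m, x i j = 1) ∧
      (∀ i ∈ Finset.Icc 1 m, ∑ j : ι, (x i j : ℝ) * p j ≤ T)) :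
    ∃ x : ℕ → ι → ℕ, (∀ i j, x i j ≤ 1) ∧
      (∀ j : ι, ∑ i ∈ Finset.Icc 1 m, x i j = 1) ∧
      (∀ i ∈ Finset.Icc 1 m, ∑ j : ι, (x i j : ℝ) * p j ≤ T) ∧
      (∀ i ∈ Finset.Icc 1 (m - 1),
        0 ≤ ∑ q ∈ Finset.Icc 1 s,
              (B : ℤ) ^ (s - q) * ∑ j ∈ Jq p ε T q, ((x i j : ℤ) - (x (i + 1) j : ℤ))) := by
  obtain ⟨x, hx01, hxassign, hxload⟩ := hfeas
  obtain ⟨π, hπmem, hπsupp, hπanti⟩ :=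
    (Icc 1 m).exists_perm_antitoneOn_comp (classWeight p ε T s B x)
  refine ⟨fun i j => x (π i) j, fun i j => hx01 _ j, fun j => ?_,
    fun i hi => hxload _ ((hπmem i).2 hi), fun i hi => ?_⟩
  · exact (π.sum_comp _ (fun i => x i j) hπsupp).trans (hxassign j)
  · rw [← classWeight_sub_classWeight, sub_nonneg]
    have hi_mem : i ∈ Icc 1 m := by simp only [mem_Icc] at hi ⊢; omega
    have hi_succ_mem : i + 1 ∈ Icc 1 m := by simp only [mem_Icc] at hi ⊢; omega
    exact hπanti hi_mem hi_succ_mem i.le_succ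

/-- If `assign(T)` has an integral solution, then so does `assign(B,T)` (i.e., one that
additionally satisfies the symmetry-breaking constraints). -/
theorem exists_integral_solution_with_symmetry_breaking {ι : Type*} [Fintype ι]
    (m s : ℕ) (ε T : ℝ) (p : ι → ℝ)
    (hp : ∀ j, 0 < p j) (hT : 0 < T)
    (hε0 : 0 < ε) (hε1 : ε < 1) (hεint : ∃ t : ℤ, ε * (t : ℝ) = 1)
    (hs : (s : ℝ) = (1 - ε) / ε ^ 2)
    (B : ℕ) (hB : B = 1 + 2 * s * ((Finset.Icc 1 s).sup fun q => (Jq p ε T q).card))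
    (hfeas : ∃ x : ℕ → ι → ℕ, (∀ i j, x i j ≤ 1) ∧
      (∀ j : ι, ∑ i ∈ Finset.Icc 1 m, x i j = 1) ∧
      (∀ i ∈ Finset.Icc 1 m, ∑ j : ι, (x i j : ℝ) * p j ≤ T)) :
    ∃ x : ℕ → ι → ℕ, (∀ i j, x i j ≤ 1) ∧
      (∀ j : ι, ∑ i ∈ Finset.Icc 1 m, x i j = 1) ∧
      (∀ i ∈ Finset.Icc 1 m, ∑ j : ι, (x i j : ℝ) * p j ≤ T) ∧
      (∀ i ∈ Finset.Icc 1 (m - 1),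
        0 ≤ ∑ q ∈ Finset.Icc 1 s,
              (B : ℤ) ^ (s - q) * ∑ j ∈ Jq p ε T q, ((x i j : ℤ) - (x (i + 1) j : ℤ))) :=
  exists_integral_solution_with_symmetry_breaking_general m s ε T p B hfeas
end
end

section
/- Suppose there exists an assignment of the jobs J to the m machines with makespan at most OPT, and define the classes J_q and the constant B with respect to T = OPT. Then there exists an integral solution of order(B,(1+ε)·OPT), i.e., a map x : [m]×J → {0,1} satisfying Σ_{i∈[m]} x_{ij} = 1 for all j ∈ J, Σ_{j∈J} x_{ij}·p_j ≤ (1+ε)·OPT for all i ∈ [m], the symmetry-breaking constraints, and the ordering constraints. -/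
noncomputable section
open scoped Classical
open Finset

/-! Relabel the machines of an assignment of makespan `OPT` so that the numbers
`∑_q B^(s-q)·|J_q ∩ jobs of i|` decrease in `i`; this gives the symmetry-breaking constraints.
Then, inside each class `J_q`, hand the jobs out again along the enumeration while keeping the
number of class-`q` jobs on every machine, so that the machines receiving `j_{q,1}, j_{q,2}, …`
have increasing labels: these are the ordering constraints. Two jobs of a class differ in length
by less than `ε²·OPT`, and a machine of load at most `OPT` carries at most `1/ε` long jobs since
each has length at least `ε·OPT`; so no load grows by more than `ε·OPT`. -/

theorem exists_perm_monotoneOn_comp {κ α : Type*} [LinearOrder κ] [LinearOrder α]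
    (K : Finset κ) (f : κ → α) :
    ∃ ρ : Equiv.Perm κ, (∀ i, ρ i ∈ K ↔ i ∈ K) ∧ {i | ρ i ≠ i} ⊆ K ∧ MonotoneOn (f ∘ ρ) K := by
  let g : Fin #K ≃o K := K.orderIsoOfFin rfl
  let π := Tuple.sort fun k => f (g k)
  let ρK : Equiv.Perm K := g.symm.toEquiv.trans (π.trans g.toEquiv)
  refine ⟨Equiv.Perm.ofSubtype ρK, fun i => ?_, fun i hi => ?_, fun i hi j hj hij => ?_⟩
  · by_cases h : i ∈ K
    · simp [Equiv.Perm.ofSubtype_apply_of_mem ρK h, h]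
    · rw [Equiv.Perm.ofSubtype_apply_of_not_mem ρK h]
  · by_contra h
    exact hi (Equiv.Perm.ofSubtype_apply_of_not_mem ρK h)
  · simp only [Function.comp_apply, Equiv.Perm.ofSubtype_apply_of_mem ρK hi,
      Equiv.Perm.ofSubtype_apply_of_mem ρK hj]
    exact Tuple.monotone_sort (fun k => f (g k))
      (g.symm.monotone (show (⟨i, hi⟩ : K) ≤ ⟨j, hj⟩ from hij))

theorem Set.BijOn.card_filter_comp {κ ι : Type*} {e : κ → ι} {K : Finset κ} {t : Finset ι}
    (he : Set.BijOn e K t) (P : ι → Prop) [DecidablePred P] :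
    #{ℓ ∈ K | P (e ℓ)} = #{j ∈ t | P j} := by
  refine card_nbij e (fun ℓ hℓ => ?_) (he.injOn.mono (Finset.coe_subset.2 (filter_subset _ _)))
    (fun j hj => ?_)
  · simp only [coe_filter, Set.mem_ofPred_eq] at hℓ ⊢
    exact ⟨he.mapsTo hℓ.1, hℓ.2⟩
  · simp only [coe_filter, Set.mem_ofPred_eq] at hj
    obtain ⟨ℓ, hℓ, rfl⟩ := he.surjOn hj.1
    exact ⟨ℓ, by simpa using ⟨hℓ, hj.2⟩, rfl⟩

theorem exists_reassign_monotoneOn {ι : Type*} (σ : ι → ℕ) {e : ℕ → ι} {K : Finset ℕ}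
    {t : Finset ι} (he : Set.BijOn e K t) :
    ∃ τ : ι → ℕ, (∀ j ∉ t, τ j = σ j) ∧ Set.range τ ⊆ Set.range σ ∧
      (∀ i, #{j ∈ t | τ j = i} = #{j ∈ t | σ j = i}) ∧ MonotoneOn (τ ∘ e) K := by
  obtain ⟨ρ, hρK, hρ, hmono⟩ := exists_perm_monotoneOn_comp K (σ ∘ e)
  let τ : ι → ℕ := fun j => if j ∈ t then σ (e (ρ (Function.invFunOn e K j))) else σ j
  have hτe : ∀ ℓ ∈ K, τ (e ℓ) = σ (e (ρ ℓ)) := fun ℓ hℓ => by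
    simp only [τ, if_pos (show e ℓ ∈ t from he.mapsTo hℓ), he.invOn_invFunOn.1 hℓ]
  refine ⟨τ, fun j hj => if_neg hj, ?_, fun i => ?_, ?_⟩
  · rintro _ ⟨j, rfl⟩
    by_cases hj : j ∈ t <;> simp [τ, hj]
  · calc #{j ∈ t | τ j = i} = #{ℓ ∈ K | τ (e ℓ) = i} := (he.card_filter_comp (τ · = i)).symm
      _ = #{ℓ ∈ K | σ (e (ρ ℓ)) = i} := by
        congr 1
        exact filter_congr fun ℓ hℓ => by rw [hτe ℓ hℓ]
      _ = #{ℓ ∈ K | σ (e ℓ) = i} := by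
        simp only [card_filter]
        exact Equiv.Perm.sum_comp ρ K (fun ℓ => if σ (e ℓ) = i then 1 else 0) hρ
      _ = #{j ∈ t | σ j = i} := he.card_filter_comp (σ · = i)
  · exact hmono.congr fun ℓ hℓ => (hτe ℓ hℓ).symm

theorem exists_reassign_monotoneOn_family {ι κ : Type*} (σ : ι → ℕ) {t : κ → Finset ι}
    {e : κ → ℕ → ι} {K : κ → Finset ℕ} {Q : Finset κ} (hdisj : (Q : Set κ).PairwiseDisjoint t)
    (he : ∀ q ∈ Q, Set.BijOn (e q) (K q) (t q)) :
    ∃ τ : ι → ℕ, (∀ j, (∀ q ∈ Q, j ∉ t q) → τ j = σ j) ∧ Set.range τ ⊆ Set.range σ ∧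
      (∀ q ∈ Q, ∀ i, #{j ∈ t q | τ j = i} = #{j ∈ t q | σ j = i}) ∧
      ∀ q ∈ Q, MonotoneOn (τ ∘ e q) (K q) := by
  induction Q using Finset.induction_on with
  | empty => exact ⟨σ, fun _ _ => rfl, subset_rfl, by simp, by simp⟩
  | insert a Q ha ih =>
    rw [coe_insert, Set.pairwiseDisjoint_insert] at hdisj
    rw [forall_mem_insert] at he
    obtain ⟨τ, hout, hrange, hcard, hmono⟩ := ih hdisj.1 he.2
    obtain ⟨τ', hout', hrange', hcard', hmono'⟩ := exists_reassign_monotoneOn τ he.1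
    have hnot : ∀ q ∈ Q, ∀ j ∈ t q, j ∉ t a := fun q hq j hj hja =>
      disjoint_left.1 (hdisj.2 q hq (ne_of_mem_of_not_mem hq ha).symm) hja hj
    have hτa : ∀ j ∈ t a, τ j = σ j := fun j hj => hout j fun q hq hjq => hnot q hq j hjq hj
    refine ⟨τ', fun j hj => ?_, hrange'.trans hrange, ?_, ?_⟩
    · rw [forall_mem_insert] at hj
      rw [hout' j hj.1, hout j hj.2]
    · rw [forall_mem_insert]
      refine ⟨fun i => ?_, fun q hq i => ?_⟩
      · rw [hcard' i]
        congr 1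
        exact filter_congr fun j hj => by rw [hτa j hj]
      · rw [← hcard q hq i]
        congr 1
        exact filter_congr fun j hj => by rw [hout' j (hnot q hq j hj)]
    · rw [forall_mem_insert]
      refine ⟨hmono', fun q hq => (hmono q hq).congr fun ℓ hℓ => ?_⟩
      exact (hout' _ (hnot q hq _ ((he.2 q hq).mapsTo hℓ))).symm

theorem exists_relabel_antitoneOn {ι α : Type*} [Fintype ι] [LinearOrder α] (σ : ι → ℕ)
    {K : Finset ℕ} (hσ : ∀ j, σ j ∈ K) (f : Finset ι → α) :
    ∃ σ' : ι → ℕ, (∀ j, σ' j ∈ K) ∧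
      (∀ i ∈ K, ∃ i' ∈ K, univ.filter (σ' · = i) = univ.filter (σ · = i')) ∧
      AntitoneOn (fun i => f (univ.filter (σ' · = i))) K := by
  obtain ⟨ρ, hρK, -, hmono⟩ :=
    exists_perm_monotoneOn_comp K (OrderDual.toDual ∘ fun i => f (univ.filter (σ · = i)))
  have hfilter : ∀ i, univ.filter (fun j => ρ.symm (σ j) = i) = univ.filter (σ · = ρ i) :=
    fun i => filter_congr fun j _ => Equiv.symm_apply_eq ρ
  refine ⟨ρ.symm ∘ σ, fun j => (hρK _).1 (by simpa using hσ j),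
    fun i hi => ⟨ρ i, (hρK i).2 hi, hfilter i⟩, ?_⟩
  simp only [Function.comp_apply, hfilter]
  exact monotoneOn_toDual_comp_iff.1 hmono

theorem sum_eq_sum_add_sum_sub_of_eqOn_compl {ι κ M : Type*} [Fintype ι] [AddCommGroup M]
    {g h : ι → M} {t : κ → Finset ι} {Q : Finset κ} (hdisj : (Q : Set κ).PairwiseDisjoint t)
    (hgh : ∀ j, (∀ q ∈ Q, j ∉ t q) → g j = h j) :
    ∑ j, g j = ∑ j, h j + ∑ q ∈ Q, (∑ j ∈ t q, g j - ∑ j ∈ t q, h j) := by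
  rw [← sub_eq_iff_eq_add', ← sum_sub_distrib]
  simp only [← sum_sub_distrib]
  rw [← sum_biUnion hdisj]
  refine (sum_subset (subset_univ _) fun j _ hj => ?_).symm
  rw [hgh j fun q hq hjq => hj (mem_biUnion.2 ⟨q, hq, hjq⟩), sub_self]

theorem sum_le_sum_add_card_mul_of_card_eq {ι : Type*} {p : ι → ℝ} {u v : Finset ι} {a δ : ℝ}
    (hu : ∀ j ∈ u, p j ≤ a + δ) (hv : ∀ j ∈ v, a ≤ p j) (huv : #u = #v) :
    ∑ j ∈ u, p j ≤ ∑ j ∈ v, p j + #v * δ := by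
  have hu' := sum_le_card_nsmul u p _ hu
  have hv' := card_nsmul_le_sum v p _ hv
  rw [nsmul_eq_mul, huv] at hu'
  rw [nsmul_eq_mul] at hv'
  linarith

section Classes

variable {ι : Type*} [Fintype ι] {p : ι → ℝ} {ε T : ℝ}

theorem mem_Jq {q : ℕ} {j : ι} :
    j ∈ Jq p ε T q ↔ (1 / ε + q - 1) * ε ^ 2 * T ≤ p j ∧ p j < (1 / ε + q) * ε ^ 2 * T := by
  simp [Jq]

theorem pairwiseDisjoint_Jq (hT : 0 ≤ T) : (Set.univ : Set ℕ).PairwiseDisjoint (Jq p ε T) := by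
  have key : ∀ q q' : ℕ, q < q' → Disjoint (Jq p ε T q) (Jq p ε T q') := by
    intro q q' hqq'
    rw [disjoint_left]
    intro j hj hj'
    have hq : (q : ℝ) + 1 ≤ q' := by exact_mod_cast hqq'
    have h := (mem_Jq.1 hj).2
    have h' := (mem_Jq.1 hj').1
    nlinarith [mul_nonneg (sq_nonneg ε) hT]
  intro q _ q' _ hne
  rcases hne.lt_or_gt with h | h
  exacts [key q q' h, (key q' q h).symm]

theorem mul_le_of_mem_Jq (hε : 0 < ε) (hT : 0 ≤ T) {q : ℕ} (hq : 1 ≤ q) {j : ι}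
    (hj : j ∈ Jq p ε T q) : ε * T ≤ p j := by
  have hq' : (1 : ℝ) ≤ q := by exact_mod_cast hq
  have h : (1 / ε + q - 1) * ε ^ 2 * T = ε * T + (q - 1) * (ε ^ 2 * T) := by
    field_simp
    ring
  have := (mem_Jq.1 hj).1
  nlinarith [mul_nonneg (sub_nonneg.2 hq') (mul_nonneg (sq_nonneg ε) hT)]

theorem load_le_of_card_filter_Jq_eq (hp : ∀ j, 0 ≤ p j) (hε : 0 < ε) (hT : 0 ≤ T)
    {s i : ℕ} {σ τ : ι → ℕ} (hload : ∑ j ∈ univ.filter (σ · = i), p j ≤ T)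
    (hout : ∀ j, (∀ q ∈ Icc 1 s, j ∉ Jq p ε T q) → τ j = σ j)
    (hcard : ∀ q ∈ Icc 1 s, #{j ∈ Jq p ε T q | τ j = i} = #{j ∈ Jq p ε T q | σ j = i}) :
    ∑ j ∈ univ.filter (τ · = i), p j ≤ (1 + ε) * T := by
  have hdisj := (pairwiseDisjoint_Jq (p := p) (ε := ε) hT).subset (Set.subset_univ (Icc 1 s))
  set c : ℕ → ℕ := fun q => #{j ∈ Jq p ε T q | σ j = i}
  have hswap : ∀ q ∈ Icc 1 s, ∑ j ∈ {j ∈ Jq p ε T q | τ j = i}, p j ≤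
      ∑ j ∈ {j ∈ Jq p ε T q | σ j = i}, p j + c q * (ε ^ 2 * T) := fun q hq =>
    sum_le_sum_add_card_mul_of_card_eq
      (fun j hj => by linarith [(mem_Jq.1 (mem_filter.1 hj).1).2])
      (fun j hj => (mem_Jq.1 (mem_filter.1 hj).1).1) (hcard q hq)
  have hcount : (∑ q ∈ Icc 1 s, (c q : ℝ)) * (ε * T) ≤ T := calc
    (∑ q ∈ Icc 1 s, (c q : ℝ)) * (ε * T) = ∑ q ∈ Icc 1 s, c q • (ε * T) := by
      simp [sum_mul, nsmul_eq_mul]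
    _ ≤ ∑ q ∈ Icc 1 s, ∑ j ∈ {j ∈ Jq p ε T q | σ j = i}, p j :=
      sum_le_sum fun q hq => card_nsmul_le_sum _ _ _ fun j hj =>
        mul_le_of_mem_Jq hε hT (mem_Icc.1 hq).1 (mem_filter.1 hj).1
    _ = ∑ j ∈ (Icc 1 s).biUnion (Jq p ε T), if σ j = i then p j else 0 := by
      rw [sum_biUnion hdisj]
      simp only [sum_filter]
    _ ≤ ∑ j, if σ j = i then p j else 0 :=
      sum_le_univ_sum_of_nonneg fun j => by split_ifs <;> simp [hp j]
    _ ≤ T := by rwa [← sum_filter]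
  rw [sum_filter, sum_eq_sum_add_sum_sub_of_eqOn_compl hdisj
    (h := fun j => if σ j = i then p j else 0) fun j hj => by simp only [hout j hj], ← sum_filter]
  simp only [← sum_filter]
  calc ∑ j ∈ univ.filter (σ · = i), p j + ∑ q ∈ Icc 1 s,
        (∑ j ∈ {j ∈ Jq p ε T q | τ j = i}, p j - ∑ j ∈ {j ∈ Jq p ε T q | σ j = i}, p j)
      ≤ T + ∑ q ∈ Icc 1 s, c q * (ε ^ 2 * T) := by
        gcongr with q hq
        linarith [hswap q hq]
    _ = T + ε * ((∑ q ∈ Icc 1 s, (c q : ℝ)) * (ε * T)) := by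
        rw [sum_mul, mul_sum]
        congr 1
        exact sum_congr rfl fun q _ => by ring
    _ ≤ (1 + ε) * T := by nlinarith

end Classes

section AssignmentMatrix

variable {ι : Type*} (τ : ι → ℕ)

def assignmentMatrix (i : ℕ) (j : ι) : ℕ := if τ j = i then 1 else 0

theorem assignmentMatrix_le_one (i : ℕ) (j : ι) : assignmentMatrix τ i j ≤ 1 := by
  unfold assignmentMatrix
  split_ifs <;> omega

theorem sum_assignmentMatrix (S : Finset ℕ) (j : ι) :
    ∑ i ∈ S, assignmentMatrix τ i j = if τ j ∈ S then 1 else 0 :=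
  sum_ite_eq S (τ j) fun _ => 1

theorem sum_assignmentMatrix_mul [Fintype ι] (i : ℕ) (f : ι → ℝ) :
    ∑ j, (assignmentMatrix τ i j : ℝ) * f j = ∑ j ∈ univ.filter (τ · = i), f j := by
  simp [assignmentMatrix, sum_filter]

theorem sum_assignmentMatrix_eq_card (t : Finset ι) (i : ℕ) :
    ∑ j ∈ t, (assignmentMatrix τ i j : ℤ) = #{j ∈ t | τ j = i} := by
  simp [assignmentMatrix]

theorem sum_Icc_assignmentMatrix_le {j j' : ι} (hj : 1 ≤ τ j) (hjj' : τ j ≤ τ j') (h : ℕ) :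
    ∑ i ∈ Icc 1 h, assignmentMatrix τ i j' ≤ ∑ i ∈ Icc 1 h, assignmentMatrix τ i j := by
  simp only [sum_assignmentMatrix, mem_Icc]
  split_ifs <;> omega

theorem sum_mul_sum_sub_assignmentMatrix_nonneg {κ : Type*} {t : κ → Finset ι} {Q : Finset κ}
    {w : κ → ℕ} {i i' : ℕ}
    (h : ∑ q ∈ Q, w q * #{j ∈ t q | τ j = i'} ≤ ∑ q ∈ Q, w q * #{j ∈ t q | τ j = i}) :
    0 ≤ ∑ q ∈ Q, (w q : ℤ) *
      ∑ j ∈ t q, ((assignmentMatrix τ i j : ℤ) - assignmentMatrix τ i' j) := by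
  simp only [sum_sub_distrib, sum_assignmentMatrix_eq_card, mul_sub]
  have := (Nat.cast_le (α := ℤ)).2 h
  push_cast at this
  linarith

end AssignmentMatrix

theorem exists_integral_solution_order_general {ι : Type*} [Fintype ι]
    (m s : ℕ) (ε OPT : ℝ) (p : ι → ℝ)
    (hp : ∀ j, 0 < p j) (hOPT : 0 < OPT)
    (hε0 : 0 < ε)
    (B : ℕ)
    -- a fixed enumeration `J_q = {j_{q,1},…,j_{q,|J_q|}}` of each class
    (jenum : ℕ → ℕ → ι)
    (henum : ∀ q ∈ Finset.Icc 1 s,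
      Set.BijOn (jenum q) (Set.Icc 1 (Jq p ε OPT q).card) ↑(Jq p ε OPT q))
    -- there is an assignment of makespan at most OPT
    (hfeas : ∃ σ : ι → ℕ, (∀ j, σ j ∈ Finset.Icc 1 m) ∧
      ∀ i ∈ Finset.Icc 1 m, ∑ j ∈ Finset.univ.filter (fun j => σ j = i), p j ≤ OPT) :
    ∃ x : ℕ → ι → ℕ, (∀ i j, x i j ≤ 1) ∧
      (∀ j : ι, ∑ i ∈ Finset.Icc 1 m, x i j = 1) ∧
      (∀ i ∈ Finset.Icc 1 m, ∑ j : ι, (x i j : ℝ) * p j ≤ (1 + ε) * OPT) ∧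
      (∀ i ∈ Finset.Icc 1 (m - 1),
        0 ≤ ∑ q ∈ Finset.Icc 1 s,
              (B : ℤ) ^ (s - q) * ∑ j ∈ Jq p ε OPT q, ((x i j : ℤ) - (x (i + 1) j : ℤ))) ∧
      (∀ q ∈ Finset.Icc 1 s, ∀ ℓ ∈ Finset.Icc 1 ((Jq p ε OPT q).card - 1),
        ∀ h ∈ Finset.Icc 1 m,
          ∑ i ∈ Finset.Icc 1 h, x i (jenum q (ℓ + 1)) ≤
            ∑ i ∈ Finset.Icc 1 h, x i (jenum q ℓ)) := by
  obtain ⟨σ₀, hσ₀, hload₀⟩ := hfeas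
  obtain ⟨σ, hσ, hjobs, hanti⟩ := exists_relabel_antitoneOn σ₀ hσ₀
    fun S => ∑ q ∈ Icc 1 s, B ^ (s - q) * #{j ∈ Jq p ε OPT q | j ∈ S}
  obtain ⟨τ, hout, hrange, hcard, hmono⟩ := exists_reassign_monotoneOn_family σ
    (e := jenum) (K := fun q => Icc 1 #(Jq p ε OPT q))
    ((pairwiseDisjoint_Jq hOPT.le).subset (Set.subset_univ (Icc 1 s : Set ℕ)))
    fun q hq => by simpa only [coe_Icc] using henum q hq
  have hτ : ∀ j, τ j ∈ Icc 1 m := fun j => by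
    obtain ⟨j', hj'⟩ := hrange ⟨j, rfl⟩
    exact hj' ▸ hσ j'
  refine ⟨assignmentMatrix τ, assignmentMatrix_le_one τ,
    fun j => by rw [sum_assignmentMatrix, if_pos (hτ j)], fun i hi => ?_, fun i hi => ?_,
    fun q hq ℓ hℓ h _ => ?_⟩
  · obtain ⟨i', hi', hi'jobs⟩ := hjobs i hi
    rw [sum_assignmentMatrix_mul]
    exact load_le_of_card_filter_Jq_eq (fun j => (hp j).le) hε0 hOPT.le
      (hi'jobs ▸ hload₀ i' hi') hout fun q hq => hcard q hq i
  · rw [mem_Icc] at hi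
    have hanti_i := hanti (mem_Icc.2 ⟨hi.1, by omega⟩) (mem_Icc.2 ⟨by omega, by omega⟩)
      (by omega : i ≤ i + 1)
    simp only [mem_filter, mem_univ, true_and] at hanti_i
    refine sum_mul_sum_sub_assignmentMatrix_nonneg τ ?_
    have hcard_sum : ∀ k, ∑ q ∈ Icc 1 s, B ^ (s - q) * #{j ∈ Jq p ε OPT q | τ j = k} =
        ∑ q ∈ Icc 1 s, B ^ (s - q) * #{j ∈ Jq p ε OPT q | σ j = k} := fun k =>
      sum_congr rfl fun q hq => by rw [hcard q hq]
    rwa [hcard_sum, hcard_sum]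
  · rw [mem_Icc] at hℓ
    refine sum_Icc_assignmentMatrix_le τ (mem_Icc.1 (hτ _)).1
      (hmono q hq ?_ ?_ (Nat.le_succ ℓ)) h
    all_goals simp only [coe_Icc, Set.mem_Icc]; omega

/-- If some assignment has makespan at most `OPT` (with classes `J_q` and `B` defined with
respect to `T = OPT`), then `order(B,(1+ε)·OPT)` has an integral solution: one satisfying
the assignment equalities, the load bound `(1+ε)·OPT`, the symmetry-breaking constraints and
the ordering constraints. -/
theorem exists_integral_solution_order {ι : Type*} [Fintype ι]
    (m s : ℕ) (ε OPT : ℝ) (p : ι → ℝ)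
    (hp : ∀ j, 0 < p j) (hOPT : 0 < OPT)
    (hε0 : 0 < ε) (hε1 : ε < 1) (hεint : ∃ t : ℤ, ε * (t : ℝ) = 1)
    (hs : (s : ℝ) = (1 - ε) / ε ^ 2)
    (B : ℕ) (hB : B = 1 + 2 * s * ((Finset.Icc 1 s).sup fun q => (Jq p ε OPT q).card))
    -- a fixed enumeration `J_q = {j_{q,1},…,j_{q,|J_q|}}` of each class
    (jenum : ℕ → ℕ → ι)
    (henum : ∀ q ∈ Finset.Icc 1 s,
      Set.BijOn (jenum q) (Set.Icc 1 (Jq p ε OPT q).card) ↑(Jq p ε OPT q))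
    -- there is an assignment of makespan at most OPT
    (hfeas : ∃ σ : ι → ℕ, (∀ j, σ j ∈ Finset.Icc 1 m) ∧
      ∀ i ∈ Finset.Icc 1 m, ∑ j ∈ Finset.univ.filter (fun j => σ j = i), p j ≤ OPT) :
    ∃ x : ℕ → ι → ℕ, (∀ i j, x i j ≤ 1) ∧
      (∀ j : ι, ∑ i ∈ Finset.Icc 1 m, x i j = 1) ∧
      (∀ i ∈ Finset.Icc 1 m, ∑ j : ι, (x i j : ℝ) * p j ≤ (1 + ε) * OPT) ∧
      (∀ i ∈ Finset.Icc 1 (m - 1),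
        0 ≤ ∑ q ∈ Finset.Icc 1 s,
              (B : ℤ) ^ (s - q) * ∑ j ∈ Jq p ε OPT q, ((x i j : ℤ) - (x (i + 1) j : ℤ))) ∧
      (∀ q ∈ Finset.Icc 1 s, ∀ ℓ ∈ Finset.Icc 1 ((Jq p ε OPT q).card - 1),
        ∀ h ∈ Finset.Icc 1 m,
          ∑ i ∈ Finset.Icc 1 h, x i (jenum q (ℓ + 1)) ≤
            ∑ i ∈ Finset.Icc 1 h, x i (jenum q ℓ)) :=
  exists_integral_solution_order_general m s ε OPT p hp hOPT hε0 B jenum henum hfeas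
end
end
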